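/- arXiv:1405.6958 — 3 statements merged into one kernel-verified Lean document; each statement's English description precedes it below -/
import Mathlib

section
/- Let p ≥ 2 and M ≥ 0 be integers, set L = p^(M+1), and let (a_n) be a mod-p Prouhet–Thue–Morse sequence of real numbers. Then for every m with 0 ≤ m ≤ M, Σ_{n=0}^{L-1} n^m · a_n = P_m · (a_0 + a_1 + ... + a_{p-1}), where P_m = Σ_{n ∈ S_0} n^m is the m-th Prouhet sum and S_0 = { n ∈ {0, ..., L-1} : v_p(n) = 0 }. -/
/-- Mod-p sum-of-digits: sum of the base-p digits of n, reduced modulo p. -/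
def vp (p n : ℕ) : ℕ := (Nat.digits p n).sum % p

/-!
Write `s(n) ∈ ZMod p` for the base-`p` digit sum of `n`. For a polynomial `f` of degree `< M`,
the sum of `f(n)` over the `n < p ^ M` with `s(n) = c` does not depend on `c`. Splitting off
the last digit, `n = r + p q` with `s(n) = r + s(q)`, the class-`c` sum up to `p ^ (M + 1)` is
`∑ r`, over classes `c - r` up to `p ^ M`, of `f(r + p X) = f(p X) + g_r(p X)`, where
`g_r = f(X + r) - f` has lower degree. The `g_r`-terms do not depend on `c` by induction, and as
`r` runs over the residues the `f(p X)`-terms run over all classes once. The theorem is the case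
`f = X ^ m`, after grouping the `n` by `v_p(n)`, on which `a_n` depends only.
-/

open Finset Polynomial

lemma Finset.sum_range_mul_eq_sum_sum {M : Type*} [AddCommMonoid M] (f : ℕ → M) (p L : ℕ) :
    ∑ n ∈ range (p * L), f n = ∑ q ∈ range L, ∑ r ∈ range p, f (r + p * q) := by
  induction L with
  | zero => simp
  | succ L ih =>
    rw [mul_add_one, sum_range_add, ih, sum_range_succ]
    simp_rw [add_comm (p * L)]

lemma ZMod.sum_range_natCast {M : Type*} [AddCommMonoid M] (p : ℕ) [NeZero p]
    (g : ZMod p → M) : ∑ r ∈ range p, g r = ∑ x, g x :=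
  sum_nbij' (↑) ZMod.val (fun _ _ => mem_univ _) (fun x _ => mem_range.2 x.val_lt)
    (fun _ hr => ZMod.val_cast_of_lt (mem_range.1 hr)) (fun x _ => ZMod.natCast_zmod_val x)
    (fun _ _ => rfl)

lemma ZMod.sum_range_sub_natCast {M : Type*} [AddCommMonoid M] (p : ℕ) [NeZero p]
    (g : ZMod p → M) (c : ZMod p) : ∑ r ∈ range p, g (c - r) = ∑ x, g x := by
  rw [ZMod.sum_range_natCast p (fun x => g (c - x))]
  exact (Equiv.subLeft c).sum_comp g

namespace Polynomial

variable {R : Type*} [CommRing R]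

lemma degree_taylor_sub_lt {f : R[X]} (hf : f ≠ 0) (r : R) :
    (taylor r f - f).degree < f.degree :=
  degree_taylor f r ▸ degree_sub_lt_left (degree_taylor f r) (by simpa using hf)
    (leadingCoeff_taylor r f)

lemma degree_comp_C_mul_X_le (f : R[X]) (a : R) : (f.comp (C a * X)).degree ≤ f.degree := by
  rcases eq_or_ne f 0 with rfl | hf
  · simp
  calc (f.comp (C a * X)).degree ≤ (f.comp (C a * X)).natDegree := degree_le_natDegree
    _ ≤ f.natDegree := by
        exact_mod_cast natDegree_comp_le.trans
          (mul_le_of_le_one_right' (natDegree_le_of_degree_le (degree_C_mul_X_le a)))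
    _ = f.degree := (degree_eq_natDegree hf).symm

lemma taylor_comp_C_mul_X (f : R[X]) (a r : R) :
    (taylor r f).comp (C a * X) = f.comp (C a * X + C r) := by
  rw [taylor_apply, comp_assoc, add_comp, X_comp, C_comp]

end Polynomial

def digitSumMod (p n : ℕ) : ZMod p := ((Nat.digits p n).sum : ZMod p)

lemma digitSumMod_add_mul {p : ℕ} (hp : 1 < p) {r : ℕ} (hr : r < p) (q : ℕ) :
    digitSumMod p (r + p * q) = r + digitSumMod p q := by
  by_cases h : r ≠ 0 ∨ q ≠ 0
  · rw [digitSumMod, Nat.digits_add p hp r q hr h, List.sum_cons, Nat.cast_add]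
    rfl
  · obtain ⟨rfl, rfl⟩ : r = 0 ∧ q = 0 := by tauto
    simp [digitSumMod]

lemma vp_eq_val_digitSumMod (p n : ℕ) [NeZero p] : vp p n = (digitSumMod p n).val := by
  rw [vp, digitSumMod, ZMod.val_natCast]

def classSum {R : Type*} [CommRing R] (p L : ℕ) (f : R[X]) (c : ZMod p) : R :=
  ∑ n ∈ range L with digitSumMod p n = c, f.eval (n : R)

section ClassSum

variable {R : Type*} [CommRing R] {p : ℕ}

lemma classSum_add (L : ℕ) (f g : R[X]) (c : ZMod p) :
    classSum p L (f + g) c = classSum p L f c + classSum p L g c := by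
  simp only [classSum, eval_add, sum_add_distrib]

lemma classSum_mul (hp : 1 < p) (L : ℕ) (f : R[X]) (c : ZMod p) :
    classSum p (p * L) f c
      = ∑ r ∈ range p, classSum p L ((taylor (r : R) f).comp (C (p : R) * X)) (c - r) := by
  simp only [classSum, sum_filter, sum_range_mul_eq_sum_sum]
  rw [sum_comm]
  refine sum_congr rfl fun r hr => sum_congr rfl fun q _ => ?_
  simp only [digitSumMod_add_mul hp (mem_range.1 hr), eq_sub_iff_add_eq', taylor_comp_C_mul_X]
  congr 1
  simp only [eval_comp, eval_add, eval_mul, eval_C, eval_X]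
  push_cast
  rw [add_comm]

theorem classSum_eq_of_degree_lt (hp : 1 < p) {M : ℕ} {f : R[X]} (hf : f.degree < M)
    (c c' : ZMod p) : classSum p (p ^ M) f c = classSum p (p ^ M) f c' := by
  have : NeZero p := ⟨by omega⟩
  induction M generalizing f c c' with
  | zero => simp [(by simpa using hf : f = 0), classSum]
  | succ M ih =>
    have hdiff : ∀ r : R, ((taylor r f - f).comp (C (p : R) * X)).degree < M := by
      intro r
      rcases eq_or_ne f 0 with rfl | hf0
      · simp
      exact (degree_comp_C_mul_X_le _ _).trans_lt
        ((degree_taylor_sub_lt hf0 r).trans_le (Order.le_of_lt_succ hf))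
    have hsplit : ∀ (r : ℕ) (d : ZMod p),
        classSum p (p ^ M) ((taylor (r : R) f).comp (C (p : R) * X)) d
          = classSum p (p ^ M) (f.comp (C (p : R) * X)) d
            + classSum p (p ^ M) ((taylor (r : R) f - f).comp (C (p : R) * X)) d := fun r d => by
      rw [← classSum_add, ← add_comp, add_sub_cancel]
    simp only [pow_succ', classSum_mul hp, hsplit, sum_add_distrib,
      ZMod.sum_range_sub_natCast p (classSum p (p ^ M) (f.comp (C (p : R) * X)))]
    congr 1
    exact sum_congr rfl fun r _ => ih (hdiff r) _ _

end ClassSum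

lemma vp_eq_iff_digitSumMod_eq {p j : ℕ} [NeZero p] (hj : j < p) (n : ℕ) :
    vp p n = j ↔ digitSumMod p n = j := by
  rw [vp_eq_val_digitSumMod]
  exact ⟨fun h => h ▸ (ZMod.natCast_zmod_val _).symm, fun h => h ▸ ZMod.val_cast_of_lt hj⟩

lemma sum_filter_vp_eq_classSum {R : Type*} [CommRing R] {p j : ℕ} [NeZero p] (hj : j < p)
    (L : ℕ) (f : R[X]) :
    ∑ n ∈ range L with vp p n = j, f.eval (n : R) = classSum p L f j := by
  simp only [classSum, vp_eq_iff_digitSumMod_eq hj]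

lemma sum_mul_eq_sum_vp_fiber {R : Type*} [CommSemiring R] {p : ℕ} (hp : 0 < p) {a : ℕ → R}
    (ha : ∀ n, a n = a (vp p n)) (s : Finset ℕ) (g : ℕ → R) :
    ∑ n ∈ s, g n * a n = ∑ j ∈ range p, (∑ n ∈ s with vp p n = j, g n) * a j := by
  rw [← sum_fiberwise_of_maps_to (g := vp p) (t := range p)
    (fun n _ => mem_range.2 (Nat.mod_lt _ hp))]
  refine sum_congr rfl fun j _ => ?_
  rw [sum_mul]
  refine sum_congr rfl fun n hn => ?_
  rw [ha n, (mem_filter.1 hn).2]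

/-- For a mod-p PTM sequence (a_n) and L = p^(M+1),
Σ_{n<L} n^m a_n = P_m (a_0 + ... + a_{p-1}) for 0 ≤ m ≤ M. -/
theorem sum_pow_mul_ptm (p M : ℕ) (hp : 2 ≤ p) (L : ℕ) (hL : L = p ^ (M + 1))
    (a : ℕ → ℝ) (ha : ∀ n, a n = a (vp p n))
    (m : ℕ) (hm : m ≤ M) :
    ∑ n ∈ Finset.range L, (n : ℝ) ^ m * a n
      = (∑ n ∈ (Finset.range L).filter (fun n => vp p n = 0), (n : ℝ) ^ m)
          * (∑ n ∈ Finset.range p, a n) := by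
  have : NeZero p := ⟨by omega⟩
  have hdeg : (X ^ m : ℝ[X]).degree < (M + 1 : ℕ) := by
    rw [degree_X_pow]
    exact_mod_cast Nat.lt_succ_of_le hm
  rw [sum_mul_eq_sum_vp_fiber (by omega) ha, mul_sum]
  refine sum_congr rfl fun j hj => ?_
  congr 1
  calc ∑ n ∈ range L with vp p n = j, (n : ℝ) ^ m
      = classSum p L (X ^ m) j := by
        simpa using sum_filter_vp_eq_classSum (mem_range.1 hj) L (X ^ m : ℝ[X])
    _ = classSum p L (X ^ m) ((0 : ℕ) : ZMod p) := by
        rw [hL]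
        exact classSum_eq_of_degree_lt hp hdeg _ _
    _ = ∑ n ∈ range L with vp p n = 0, (n : ℝ) ^ m := by
        simpa using (sum_filter_vp_eq_classSum (by omega : 0 < p) L (X ^ m : ℝ[X])).symm
end

section
/- Let p ≥ 2 be an integer and let (a_n) be a mod-p Prouhet–Thue–Morse sequence of real numbers. With B_i = Σ_{n=0}^{p-1} w_i(n) · a_n, the decomposition a_n = (1/2^{p-1}) · Σ_{i=0}^{2^{p-1}-1} w_i(n) · B_i holds for every n ≥ 0. -/
/-- The weight sequence w_i(n) = (-1)^{d^{(i)}_{p-1-v_p(n)}}, where d_k^{(i)} is the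
k-th binary digit of i. -/
def w (p i n : ℕ) : ℝ := (-1 : ℝ) ^ (i / 2 ^ (p - 1 - vp p n) % 2)

open Finset

section BitSign

variable {R : Type*} [CommRing R]

def bitSign (k i : ℕ) : R := if i.testBit k then -1 else 1

theorem neg_one_pow_div_two_pow_mod_two (i k : ℕ) :
    (-1 : R) ^ (i / 2 ^ k % 2) = bitSign k i := by
  rcases Nat.mod_two_eq_zero_or_one (i / 2 ^ k) with h | h <;>
    simp [bitSign, h, Nat.testBit_eq_decide_div_mod_eq]

theorem bitSign_mul_self (k i : ℕ) : bitSign k i * bitSign k i = (1 : R) := by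
  unfold bitSign; split_ifs <;> simp

theorem bitSign_xor_two_pow_self (k i : ℕ) :
    bitSign k (i ^^^ 2 ^ k) = -(bitSign k i : R) := by
  unfold bitSign
  rw [Nat.testBit_xor, Nat.testBit_two_pow_self]
  cases i.testBit k <;> simp

theorem bitSign_xor_two_pow_of_ne {k l : ℕ} (h : k ≠ l) (i : ℕ) :
    bitSign l (i ^^^ 2 ^ k) = (bitSign l i : R) := by
  simp [bitSign, Nat.testBit_xor, Nat.testBit_two_pow_of_ne h]

theorem sum_bitSign_mul_bitSign_of_ne {N k l : ℕ} (hk : k < N) (hkl : k ≠ l) :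
    ∑ i ∈ range (2 ^ N), bitSign k i * bitSign l i = (0 : R) := by
  refine sum_involution (fun i _ => i ^^^ 2 ^ k) (fun i _ => ?_) (fun i _ _ h => ?_)
    (fun i hi => ?_) (fun i _ => xor_cancel_right _ _)
  · rw [bitSign_xor_two_pow_self, bitSign_xor_two_pow_of_ne hkl, neg_mul, add_neg_cancel]
  · simpa [Nat.testBit_xor, Nat.testBit_two_pow_self] using congrArg (Nat.testBit · k) h
  · exact mem_range.2 (Nat.xor_lt_two_pow (mem_range.1 hi) (Nat.pow_lt_pow_right one_lt_two hk))

theorem sum_bitSign_mul_bitSign {N k l : ℕ} (hk : k ≤ N) (hl : l ≤ N) :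
    ∑ i ∈ range (2 ^ N), bitSign k i * bitSign l i = if k = l then (2 : R) ^ N else 0 := by
  split_ifs with hkl
  · simp [hkl, bitSign_mul_self]
  rcases hk.lt_or_eq with hk | rfl
  · exact sum_bitSign_mul_bitSign_of_ne hk hkl
  · simpa only [mul_comm] using
      sum_bitSign_mul_bitSign_of_ne (R := R) (lt_of_le_of_ne hl (Ne.symm hkl)) (Ne.symm hkl)

end BitSign

theorem vp_lt {p : ℕ} (hp : 0 < p) (n : ℕ) : vp p n < p := Nat.mod_lt _ hp

theorem vp_of_lt {p m : ℕ} (hm : m < p) : vp p m = m := by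
  rcases eq_or_ne m 0 with rfl | hm0
  · simp [vp]
  · simp [vp, Nat.digits_of_lt p m hm0 hm, Nat.mod_eq_of_lt hm]

theorem sum_w_mul_w {p : ℕ} (hp : 0 < p) (n m : ℕ) :
    ∑ i ∈ range (2 ^ (p - 1)), w p i n * w p i m =
      if vp p n = vp p m then (2 : ℝ) ^ (p - 1) else 0 := by
  simp only [w, neg_one_pow_div_two_pow_mod_two]
  rw [sum_bitSign_mul_bitSign (Nat.sub_le _ _) (Nat.sub_le _ _)]
  have := vp_lt hp n
  have := vp_lt hp m
  exact if_congr (by omega) rfl rfl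

/-- Rademacher-transform decomposition of a mod-p PTM sequence:
a_n = (1/2^{p-1}) Σ_{i=0}^{2^{p-1}-1} w_i(n) B_i. -/
theorem ptm_decomposition (p : ℕ) (hp : 2 ≤ p)
    (a : ℕ → ℝ) (ha : ∀ n, a n = a (vp p n))
    (B : ℕ → ℝ) (hB : ∀ i, B i = ∑ n ∈ Finset.range p, w p i n * a n)
    (n : ℕ) :
    a n = (1 / 2 ^ (p - 1)) * ∑ i ∈ Finset.range (2 ^ (p - 1)), w p i n * B i := by
  have hp0 : 0 < p := by omega
  have hsum : ∑ i ∈ range (2 ^ (p - 1)), w p i n * B i = 2 ^ (p - 1) * a n :=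
    calc ∑ i ∈ range (2 ^ (p - 1)), w p i n * B i
        = ∑ m ∈ range p, (∑ i ∈ range (2 ^ (p - 1)), w p i n * w p i m) * a m := by
          simp only [hB, mul_sum, sum_mul, mul_assoc]
          exact sum_comm
      _ = ∑ m ∈ range p, if vp p n = m then 2 ^ (p - 1) * a m else 0 := by
          refine sum_congr rfl fun m hm => ?_
          rw [sum_w_mul_w hp0, vp_of_lt (mem_range.1 hm), ite_mul, zero_mul]
      _ = 2 ^ (p - 1) * a n := by
          rw [sum_ite_eq, if_pos (mem_range.2 (vp_lt hp0 n)), ← ha]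
  rw [hsum]
  field_simp
end

section
/- Let p ≥ 2 be an integer, let 0 ≤ i ≤ 2^p - 1, and define E_p(i, n) = d^{(i)}_{p-1-v_p(n)}. Then for all n ≥ 0 and 0 ≤ r < p, E_p(i, pn + r) - E_p(i, n) ≡ E_p(x_r(i), n) (mod 2), where x_r(i) is the degree-p xor-shift of i by r. -/
/-- E_p(i,n) = d^{(i)}_{p-1-v_p(n)}, the binary digit of i in position p-1-v_p(n). -/
def E (p i n : ℕ) : ℕ := i / 2 ^ (p - 1 - vp p n) % 2

/-- The degree-p xor-shift of i by r: the bitwise XOR of i with the cyclic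
rotation (on p bits) of i by r positions (bit k of the rotation is bit
(k-r) mod p of i). -/
def xorShift (p r i : ℕ) : ℕ := i ^^^ ((i * 2 ^ r) % 2 ^ p + i / 2 ^ (p - r))

/-
Appending the base-`p` digit `r` to `n` adds `r` to its digit sum, so `v_p(pn + r) = v_p(n) + r`
mod `p`. Hence, with `v = v_p(n)`, the two terms on the left are the bits of `i` at positions
`p-1-(v+r) mod p` and `p-1-v`, and the former is the bit at `p-1-v` of the rotation of `i` by
`r`. Modulo 2 a difference of bits is their xor.
-/

theorem vp_mul_add {p : ℕ} (hp : 1 < p) (n : ℕ) {r : ℕ} (hr : r < p) :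
    vp p (p * n + r) = (vp p n + r) % p := by
  rcases Nat.eq_zero_or_pos n with rfl | hn
  · rcases Nat.eq_zero_or_pos r with rfl | hr0
    · simp [vp]
    · rw [vp, vp, mul_zero, zero_add, Nat.digits_of_lt p r hr0.ne' hr]
      simp
  · rw [vp, vp, add_comm (p * n), Nat.digits_add p hp r n hr (Or.inr hn.ne'), List.sum_cons,
      Nat.mod_add_mod, add_comm r]

theorem E_eq_toNat_testBit (p i n : ℕ) : E p i n = (i.testBit (p - 1 - vp p n)).toNat :=
  (Nat.toNat_testBit i _).symm

def rotateBits (p r i : ℕ) : ℕ := (i * 2 ^ r) % 2 ^ p + i / 2 ^ (p - r)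

theorem xorShift_eq_xor_rotateBits (p r i : ℕ) : xorShift p r i = i ^^^ rotateBits p r i := rfl

theorem testBit_rotateBits {p r i : ℕ} (hi : i < 2 ^ p) (hr : r ≤ p) {k : ℕ} (hk : k < p) :
    (rotateBits p r i).testBit k = i.testBit ((k + p - r) % p) := by
  have hlow : (i * 2 ^ r) % 2 ^ p = 2 ^ r * (i % 2 ^ (p - r)) := by
    rw [← Nat.mul_mod_mul_left, ← pow_add, Nat.add_sub_cancel' hr, mul_comm]
  have hhigh : i / 2 ^ (p - r) < 2 ^ r := by
    rw [Nat.div_lt_iff_lt_mul (by positivity), ← pow_add, Nat.add_sub_cancel' hr]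
    exact hi
  rw [rotateBits, hlow, Nat.testBit_two_pow_mul_add _ hhigh]
  split_ifs with hkr
  · rw [Nat.testBit_div_two_pow, Nat.mod_eq_of_lt (by omega)]
    congr 1
    omega
  · rw [Nat.testBit_mod_two_pow, decide_eq_true (by omega), Bool.true_and,
      show k + p - r = k - r + p by omega, Nat.add_mod_right, Nat.mod_eq_of_lt (by omega)]

theorem sub_one_sub_add_sub_mod {p v r : ℕ} (hv : v < p) (hr : r < p) :
    (p - 1 - v + p - r) % p = p - 1 - (v + r) % p := by
  rcases lt_or_ge (v + r) p with h | h
  · rw [show p - 1 - v + p - r = p - 1 - v - r + p by omega, Nat.add_mod_right,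
      Nat.mod_eq_of_lt (by omega), Nat.mod_eq_of_lt h]
    omega
  · rw [Nat.mod_eq_of_lt (by omega), Nat.mod_eq_sub_mod h, Nat.mod_eq_of_lt (by omega)]
    omega

theorem Bool.toNat_sub_toNat_modEq_xor (a b : Bool) :
    (a.toNat : ℤ) - b.toNat ≡ (b ^^ a).toNat [ZMOD 2] := by
  cases a <;> cases b <;> decide

/-- E_p(i, pn+r) - E_p(i, n) ≡ E_p(x_r(i), n) (mod 2). -/
theorem E_shift_modeq (p : ℕ) (hp : 2 ≤ p) (i : ℕ) (hi : i ≤ 2 ^ p - 1)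
    (n r : ℕ) (hr : r < p) :
    (E p i (p * n + r) : ℤ) - (E p i n : ℤ) ≡ (E p (xorShift p r i) n : ℤ) [ZMOD 2] := by
  have hv : vp p n < p := Nat.mod_lt _ (by omega)
  have hi' : i < 2 ^ p := by have := Nat.one_le_two_pow (n := p); omega
  have hrot : (rotateBits p r i).testBit (p - 1 - vp p n) =
      i.testBit (p - 1 - (vp p n + r) % p) := by
    rw [testBit_rotateBits hi' hr.le (by omega), sub_one_sub_add_sub_mod hv hr]
  rw [E_eq_toNat_testBit, E_eq_toNat_testBit, E_eq_toNat_testBit, vp_mul_add hp n hr,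
    xorShift_eq_xor_rotateBits, Nat.testBit_xor, hrot]
  exact Bool.toNat_sub_toNat_modEq_xor _ _
end
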